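/- For the roots u = e₁ − e₂ and v = e₂ − e₃ in Φ₀ (which satisfy ⟨u,v⟩ = −1 and span a plane S with S ∩ Φ₀ a root system of type A₂), the set { w ∈ Φ₀ : ⟨u,w⟩ = 0 and ⟨v,w⟩ = 0 } has exactly 72 elements. (This is the root system of type E₆ arising as the orthogonal complement of an A₂ subsystem of E₈, as claimed in Section 3.1.1.) -/

import Mathlib

open scoped BigOperators

/-- The E₈ root set in ℝ⁸: `±eᵢ ± eⱼ` for `i < j`, together with
`(ε₁e₁ + ⋯ + ε₈e₈)/2` with each `εᵢ ∈ {1,−1}` and `ε₁⋯ε₈ = 1`. -/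
def Phi0 : Set (EuclideanSpace ℝ (Fin 8)) :=
  {v | (∃ i j : Fin 8, i < j ∧ ∃ s t : ℝ, (s = 1 ∨ s = -1) ∧ (t = 1 ∨ t = -1) ∧
        v = s • EuclideanSpace.single i (1 : ℝ) + t • EuclideanSpace.single j (1 : ℝ)) ∨
       (∃ ε : Fin 8 → ℝ, (∀ i, ε i = 1 ∨ ε i = -1) ∧ (∏ i, ε i) = 1 ∧
        v = (1 / 2 : ℝ) • ∑ i, ε i • EuclideanSpace.single i (1 : ℝ))}

/-- `u = e₁ − e₂`. -/
noncomputable def uRoot : EuclideanSpace ℝ (Fin 8) :=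
  EuclideanSpace.single (0 : Fin 8) (1 : ℝ) - EuclideanSpace.single (1 : Fin 8) (1 : ℝ)

/-- `v = e₂ − e₃`. -/
noncomputable def vRoot : EuclideanSpace ℝ (Fin 8) :=
  EuclideanSpace.single (1 : Fin 8) (1 : ℝ) - EuclideanSpace.single (2 : Fin 8) (1 : ℝ)

namespace CardPerpA2Aux

noncomputable def sgn (b : Bool) : ℝ := if b then 1 else -1

lemma sgn_mem (b : Bool) : sgn b = 1 ∨ sgn b = -1 := by cases b <;> simp [sgn]
lemma sgn_ne_zero (b : Bool) : sgn b ≠ 0 := by cases b <;> norm_num [sgn]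
lemma sgn_inj : Function.Injective sgn := by
  intro a b h; cases a <;> cases b <;> simp_all [sgn] <;> norm_num at h

abbrev PA := {p : (Fin 8 × Fin 8) × Bool × Bool // 2 < p.1.1 ∧ p.1.1 < p.1.2}
abbrev PB := {ε : Fin 8 → Bool // ε 0 = ε 1 ∧ ε 1 = ε 2 ∧
    (Finset.univ.filter (fun i => ε i = false)).card % 2 = 0}

noncomputable def g : PA ⊕ PB → EuclideanSpace ℝ (Fin 8)
  | .inl p => sgn p.1.2.1 • EuclideanSpace.single p.1.1.1 (1 : ℝ) +
      sgn p.1.2.2 • EuclideanSpace.single p.1.1.2 (1 : ℝ)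
  | .inr ε => (1 / 2 : ℝ) • ∑ i, sgn (ε.1 i) • EuclideanSpace.single i (1 : ℝ)

lemma sum_apply (f : Fin 8 → EuclideanSpace ℝ (Fin 8)) (k : Fin 8) :
    (∑ i, f i) k = ∑ i, f i k := by
  induction (Finset.univ : Finset (Fin 8)) using Finset.induction with
  | empty => simp
  | insert _ _ h ih => rw [Finset.sum_insert h, Finset.sum_insert h, PiLp.add_apply, ih]

lemma pair_apply (i j : Fin 8) (s t : ℝ) (k : Fin 8) :
    (s • EuclideanSpace.single i (1 : ℝ) + t • EuclideanSpace.single j (1 : ℝ)) k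
      = (if k = i then s else 0) + (if k = j then t else 0) := by
  simp [EuclideanSpace.single_apply, mul_ite]

lemma half_apply (ε : Fin 8 → ℝ) (k : Fin 8) :
    ((1 / 2 : ℝ) • ∑ i, ε i • EuclideanSpace.single i (1 : ℝ)) k = (1 / 2) * ε k := by
  rw [PiLp.smul_apply, sum_apply]
  simp [EuclideanSpace.single_apply, mul_ite]

lemma prod_sgn (b : Fin 8 → Bool) :
    ∏ i, sgn (b i) = (-1 : ℝ) ^ (Finset.univ.filter (fun i => b i = false)).card := by
  classical
  rw [← Finset.prod_filter_mul_prod_filter_not Finset.univ (fun i => b i = false)]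
  have h1 : ∏ i ∈ Finset.univ.filter (fun i => b i = false), sgn (b i)
      = (-1 : ℝ) ^ (Finset.univ.filter (fun i => b i = false)).card := by
    rw [Finset.prod_congr rfl (fun i hi => ?_), Finset.prod_const]
    simp only [Finset.mem_filter] at hi
    simp [sgn, hi.2]
  have h2 : ∏ i ∈ Finset.univ.filter (fun i => ¬ b i = false), sgn (b i) = 1 := by
    apply Finset.prod_eq_one
    intro i hi
    simp only [Finset.mem_filter] at hi
    have : b i = true := by simpa using hi.2
    simp [sgn, this]
  rw [h1, h2, mul_one]

lemma inner_uRoot (w : EuclideanSpace ℝ (Fin 8)) :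
    (inner ℝ uRoot w : ℝ) = w 0 - w 1 := by
  simp [uRoot, inner_sub_left, EuclideanSpace.inner_single_left]

lemma inner_vRoot (w : EuclideanSpace ℝ (Fin 8)) :
    (inner ℝ vRoot w : ℝ) = w 1 - w 2 := by
  simp [vRoot, inner_sub_left, EuclideanSpace.inner_single_left]

lemma g_injective : Function.Injective g := by
  rintro (⟨⟨⟨i, j⟩, s, t⟩, hi2, hij⟩ | ⟨b, hb⟩) (⟨⟨⟨i', j'⟩, s', t'⟩, hi2', hij'⟩ | ⟨c, hc⟩) h
  · simp only [g] at h
    have key : ∀ k : Fin 8, (if k = i then sgn s else 0) + (if k = j then sgn t else 0)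
        = (if k = i' then sgn s' else 0) + (if k = j' then sgn t' else 0) := by
      intro k
      rw [← pair_apply, ← pair_apply, h]
    simp only at hi2 hi2' hij hij'
    have hii : i = i' := by
      by_contra hne
      by_cases hij2 : i = j'
      · have hlt : i' < i := lt_of_lt_of_eq hij' hij2.symm
        have h2 := key i'
        rw [if_neg (ne_of_lt hlt), if_neg (ne_of_lt (lt_trans hlt hij)), if_pos rfl,
            if_neg (ne_of_lt hij')] at h2
        exact sgn_ne_zero s' (by linarith)
      · have h1 := key i
        rw [if_pos rfl, if_neg (ne_of_lt hij), if_neg hne, if_neg hij2] at h1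
        exact sgn_ne_zero s (by linarith)
    subst hii
    have hjj : j = j' := by
      by_contra hne
      have h1 := key j
      rw [if_neg (ne_of_lt hij).symm, if_pos rfl, if_neg (ne_of_lt hij).symm,
          if_neg hne] at h1
      exact sgn_ne_zero t (by linarith)
    subst hjj
    have hs : s = s' := by
      have h1 := key i
      rw [if_pos rfl, if_neg (ne_of_lt hij), if_pos rfl, if_neg (ne_of_lt hij)] at h1
      exact sgn_inj (by linarith)
    have ht : t = t' := by
      have h1 := key j
      rw [if_neg (ne_of_lt hij).symm, if_pos rfl, if_neg (ne_of_lt hij).symm,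
          if_pos rfl] at h1
      exact sgn_inj (by linarith)
    subst hs; subst ht; rfl
  · exfalso
    simp only at hi2 hij
    have h0 := congrFun (congrArg WithLp.ofLp h) (0 : Fin 8)
    simp only [g] at h0
    rw [pair_apply] at h0
    have h0' : ((1 / 2 : ℝ) • ∑ k, sgn (c k) • EuclideanSpace.single k (1 : ℝ)) 0
        = (1 / 2) * sgn (c 0) := half_apply _ 0
    rw [h0'] at h0
    have hi0 : (0 : Fin 8) ≠ i := by
      intro e; rw [← e] at hi2; exact absurd hi2 (by decide)
    have hj0 : (0 : Fin 8) ≠ j := by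
      intro e; rw [← e] at hij; exact absurd (lt_trans hi2 hij) (by decide)
    rw [if_neg hi0, if_neg hj0] at h0
    exact sgn_ne_zero (c 0) (by linarith)
  · exfalso
    simp only at hi2' hij'
    have h0 := congrFun (congrArg WithLp.ofLp h) (0 : Fin 8)
    simp only [g] at h0
    rw [pair_apply] at h0
    have h0' : ((1 / 2 : ℝ) • ∑ k, sgn (b k) • EuclideanSpace.single k (1 : ℝ)) 0
        = (1 / 2) * sgn (b 0) := half_apply _ 0
    rw [h0'] at h0
    have hi0 : (0 : Fin 8) ≠ i' := by
      intro e; rw [← e] at hi2'; exact absurd hi2' (by decide)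
    have hj0 : (0 : Fin 8) ≠ j' := by
      intro e; rw [← e] at hij'; exact absurd (lt_trans hi2' hij') (by decide)
    rw [if_neg hi0, if_neg hj0] at h0
    exact sgn_ne_zero (b 0) (by linarith)
  · have : b = c := by
      funext k
      have hk := congrFun (congrArg WithLp.ofLp h) k
      simp only [g] at hk
      rw [show ((1 / 2 : ℝ) • ∑ i, sgn (b i) • EuclideanSpace.single i (1 : ℝ)) k
            = (1 / 2) * sgn (b k) from half_apply _ k,
          show ((1 / 2 : ℝ) • ∑ i, sgn (c i) • EuclideanSpace.single i (1 : ℝ)) k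
            = (1 / 2) * sgn (c k) from half_apply _ k] at hk
      exact sgn_inj (by linarith)
    subst this; rfl

lemma set_eq : {w ∈ Phi0 | (inner ℝ uRoot w : ℝ) = 0 ∧ (inner ℝ vRoot w : ℝ) = 0}
    = Set.range g := by
  classical
  ext w
  simp only [Set.mem_setOf_eq, Set.mem_range, inner_uRoot, inner_vRoot, sub_eq_zero]
  constructor
  · rintro ⟨hw, h01, h12⟩
    rcases hw with ⟨i, j, hij, s, t, hs, ht, rfl⟩ | ⟨ε, hε, hprod, rfl⟩
    · rw [pair_apply i j s t 0, pair_apply i j s t 1] at h01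
      rw [pair_apply i j s t 1, pair_apply i j s t 2] at h12
      have hs0 : s ≠ 0 := by rcases hs with rfl | rfl <;> norm_num
      have ht0 : t ≠ 0 := by rcases ht with rfl | rfl <;> norm_num
      have hi : 2 < i := by
        by_contra hlt
        have hle : (i : ℕ) ≤ 2 := by
          rw [not_lt] at hlt
          exact hlt
        rcases i with ⟨iv, hiv⟩
        simp only at hle
        interval_cases iv <;> fin_cases j <;>
          simp_all (config := { decide := true }) [Fin.lt_def, Fin.ext_iff]
      rcases hs with rfl | rfl <;> rcases ht with rfl | rfl
      · exact ⟨.inl ⟨⟨⟨i, j⟩, true, true⟩, hi, hij⟩, by simp [g, sgn]⟩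
      · exact ⟨.inl ⟨⟨⟨i, j⟩, true, false⟩, hi, hij⟩, by simp [g, sgn]⟩
      · exact ⟨.inl ⟨⟨⟨i, j⟩, false, true⟩, hi, hij⟩, by simp [g, sgn]⟩
      · exact ⟨.inl ⟨⟨⟨i, j⟩, false, false⟩, hi, hij⟩, by simp [g, sgn]⟩
    · rw [half_apply ε 0, half_apply ε 1] at h01
      rw [half_apply ε 1, half_apply ε 2] at h12
      have e01 : ε 0 = ε 1 := by linarith
      have e12 : ε 1 = ε 2 := by linarith
      set b : Fin 8 → Bool := fun k => if ε k = 1 then true else false with hbdef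
      have hsb : ∀ k, sgn (b k) = ε k := by
        intro k
        rcases hε k with h | h <;> norm_num [hbdef, sgn, h]
      have hb01 : b 0 = b 1 := by simp [hbdef, e01]
      have hb12 : b 1 = b 2 := by simp [hbdef, e12]
      have hpar : (Finset.univ.filter (fun i => b i = false)).card % 2 = 0 := by
        have hp : (-1 : ℝ) ^ (Finset.univ.filter (fun i => b i = false)).card = 1 := by
          rw [← prod_sgn, Finset.prod_congr rfl (fun k _ => hsb k)]
          exact hprod
        by_contra hodd
        have hoddn : Odd (Finset.univ.filter (fun i => b i = false)).card :=
          Nat.odd_iff.mpr (by omega)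
        rw [Odd.neg_one_pow hoddn] at hp
        norm_num at hp
      refine ⟨.inr ⟨b, hb01, hb12, hpar⟩, ?_⟩
      simp only [g]
      congr 1
      exact Finset.sum_congr rfl fun k _ => by rw [hsb]
  · rintro ⟨x, rfl⟩
    rcases x with ⟨⟨⟨i, j⟩, s, t⟩, hi2, hij⟩ | ⟨b, hb01, hb12, hpar⟩
    · simp only at hi2 hij
      have hk : ∀ k : Fin 8, g (.inl ⟨⟨⟨i, j⟩, s, t⟩, hi2, hij⟩) k
          = (if k = i then sgn s else 0) + (if k = j then sgn t else 0) := by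
        intro k
        simp only [g]
        rw [pair_apply]
      have hzero : ∀ k : Fin 8, k < i →
          g (.inl ⟨⟨⟨i, j⟩, s, t⟩, hi2, hij⟩) k = 0 := by
        intro k hklt
        rw [hk k, if_neg (ne_of_lt hklt), if_neg (ne_of_lt (lt_trans hklt hij)), add_zero]
      refine ⟨Or.inl ⟨i, j, hij, sgn s, sgn t, sgn_mem s, sgn_mem t, rfl⟩, ?_, ?_⟩
      · rw [hzero 0 (lt_trans (by decide : (0 : Fin 8) < 2) hi2),
            hzero 1 (lt_trans (by decide : (1 : Fin 8) < 2) hi2)]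
      · rw [hzero 1 (lt_trans (by decide : (1 : Fin 8) < 2) hi2), hzero 2 hi2]
    · have hk : ∀ k : Fin 8, g (.inr ⟨b, hb01, hb12, hpar⟩) k = (1 / 2) * sgn (b k) := by
        intro k
        simp only [g]
        exact half_apply _ k
      refine ⟨Or.inr ⟨fun k => sgn (b k), fun k => sgn_mem _, ?_, rfl⟩, ?_, ?_⟩
      · rw [prod_sgn]
        exact Even.neg_one_pow (Nat.even_iff.mpr hpar)
      · rw [hk 0, hk 1, hb01]
      · rw [hk 1, hk 2, hb12]

end CardPerpA2Aux

set_option maxRecDepth 100000 in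
/-- For the roots `u = e₁ − e₂` and `v = e₂ − e₃` (spanning an A₂
subsystem), the set of roots of Φ₀ orthogonal to both has exactly 72 elements
(the root system of type E₆). -/
theorem card_perp_A2_eq_72 :
    {w ∈ Phi0 | (inner ℝ uRoot w : ℝ) = 0 ∧ (inner ℝ vRoot w : ℝ) = 0}.Finite ∧
    Nat.card {w ∈ Phi0 | (inner ℝ uRoot w : ℝ) = 0 ∧ (inner ℝ vRoot w : ℝ) = 0} = 72 := by
  rw [CardPerpA2Aux.set_eq]
  refine ⟨Set.finite_range _, ?_⟩
  rw [Nat.card_range_of_injective CardPerpA2Aux.g_injective, Nat.card_eq_fintype_card,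
    Fintype.card_sum]
  have h1 : Fintype.card CardPerpA2Aux.PA = 40 := by decide
  have h2 : Fintype.card CardPerpA2Aux.PB = 32 := by decide
  rw [h1, h2]
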